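/- Let M be an n×n real symmetric matrix whose eigenvalues all lie in [0, ρ] with 0 < ρ < 1, let x* ∈ ℝⁿ, x_0 ∈ ℝⁿ, and define x_i by x_i − x* = Mⁱ(x_0 − x*) for i = 0, 1, …, k. Set γ = (1 − √(1−ρ))/(1 + √(1−ρ)). Then the minimum over all real coefficients α_0, …, α_k with Σ_{i=0}^{k} α_i = 1 of ‖Σ_{i=0}^{k} α_i x_i − x*‖ is at most (2γᵏ/(1 + γ^{2k})) ‖x_0 − x*‖. -/

import Mathlib

open scoped RealInnerProductSpace Matrix
open Finset

/-!
If `p` has degree at most `k` and `p(1) = 1`, the affine combination with weights `α_i = p.coeff i`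
has error `p(M)(x_0 − x*)`, and by the spectral theorem `‖p(M)‖` is at most the maximum of `|p|`
over the eigenvalues of `M`, which lie in `[0, ρ]`. Take for `p` the Chebyshev polynomial `T_k`
transported from `[-1, 1]` to `[0, ρ]` and normalised at `1`: its maximum on `[0, ρ]` is
`1 / T_k(2/ρ − 1)`, and `2/ρ − 1 = (γ + γ⁻¹)/2`, so that `T_k(2/ρ − 1) = (γᵏ + γ⁻ᵏ)/2`.
-/

open Polynomial

theorem Matrix.toEuclideanLin_pow {𝕜 ι : Type*} [RCLike 𝕜] [Fintype ι] [DecidableEq ι]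
    (M : Matrix ι ι 𝕜) (i : ℕ) :
    Matrix.toEuclideanLin (M ^ i) = Matrix.toEuclideanLin M ^ i := by
  rw [← Matrix.coe_toEuclideanCLM_eq_toEuclideanLin, map_pow, ContinuousLinearMap.toLinearMap_pow,
    Matrix.coe_toEuclideanCLM_eq_toEuclideanLin]

namespace Polynomial

theorem sum_fin_coeff_eq_eval_one {R : Type*} [CommSemiring R] {p : R[X]} {k : ℕ}
    (hp : p.natDegree ≤ k) : ∑ i : Fin (k + 1), p.coeff i = p.eval 1 := by
  rw [eval_eq_sum_range' (Nat.lt_succ_of_le hp), Fin.sum_univ_eq_sum_range (fun i => p.coeff i)]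
  simp

theorem sum_fin_coeff_smul_pow_apply {R V : Type*} [CommRing R] [AddCommGroup V]
    [Module R V] (T : Module.End R V) {p : R[X]} {k : ℕ} (hp : p.natDegree ≤ k) (v : V) :
    ∑ i : Fin (k + 1), p.coeff i • (T ^ (i : ℕ)) v = aeval T p v := by
  rw [aeval_eq_sum_range' (Nat.lt_succ_of_le hp), LinearMap.sum_apply,
    ← Fin.sum_univ_eq_sum_range (fun i => (p.coeff i • T ^ i) v)]
  rfl

theorem sum_coeff_smul_iterate_sub_eq_aeval {R V : Type*} [CommRing R] [AddCommGroup V]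
    [Module R V] (T : Module.End R V) {p : R[X]} {k : ℕ} (hp : p.natDegree ≤ k)
    (hp1 : p.eval 1 = 1) {x : Fin (k + 1) → V} {xstar : V}
    (hx : ∀ i : Fin (k + 1), x i - xstar = (T ^ (i : ℕ)) (x 0 - xstar)) :
    (∑ i : Fin (k + 1), p.coeff i • x i) - xstar = aeval T p (x 0 - xstar) := by
  rw [← sum_fin_coeff_smul_pow_apply T hp]
  simp_rw [← hx, smul_sub, sum_sub_distrib, ← sum_smul, sum_fin_coeff_eq_eval_one hp, hp1,
    one_smul]

theorem Chebyshev.T_real_eval_half_add_inv {u : ℝ} (hu : 0 < u) (n : ℕ) :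
    (T ℝ n).eval ((u + u⁻¹) / 2) = (u ^ n + u⁻¹ ^ n) / 2 := by
  have hexp : Real.exp (n * Real.log u) = u ^ n := by
    rw [← Real.log_pow, Real.exp_log (pow_pos hu n)]
  rw [← Real.cosh_log hu, T_real_cosh, Real.cosh_eq, Real.exp_neg, Int.cast_natCast, hexp,
    inv_pow]

end Polynomial

section Spectral

variable {E : Type*} [NormedAddCommGroup E] [InnerProductSpace ℝ E]

theorem Module.End.HasEigenvalue.mem_Icc_of_inner_bounds {T : Module.End ℝ E} {μ ρ : ℝ}
    (hμ : T.HasEigenvalue μ) (h : ∀ v, 0 ≤ ⟪T v, v⟫ ∧ ⟪T v, v⟫ ≤ ρ * ‖v‖ ^ 2) :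
    μ ∈ Set.Icc 0 ρ := by
  obtain ⟨v, hv⟩ := hμ.exists_hasEigenvector
  have hquad : ⟪T v, v⟫ = μ * ‖v‖ ^ 2 := by
    rw [hv.apply_eq_smul, real_inner_smul_left, real_inner_self_eq_norm_sq]
  have hpos : 0 < ‖v‖ ^ 2 := pow_pos (norm_pos_iff.mpr hv.2) 2
  obtain ⟨h0, hρ⟩ := h v
  rw [hquad] at h0 hρ
  exact ⟨nonneg_of_mul_nonneg_left h0 hpos, le_of_mul_le_mul_right hρ hpos⟩

theorem LinearMap.IsSymmetric.norm_aeval_apply_le [FiniteDimensional ℝ E] {T : E →ₗ[ℝ] E}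
    (hT : T.IsSymmetric) {p : ℝ[X]} {C : ℝ} (hC : 0 ≤ C)
    (hp : ∀ μ, Module.End.HasEigenvalue T μ → |p.eval μ| ≤ C) (v : E) :
    ‖aeval T p v‖ ≤ C * ‖v‖ := by
  set b := hT.eigenvectorBasis rfl
  set c := b.repr v
  set w : EuclideanSpace ℝ _ := WithLp.toLp 2 fun i => p.eval (hT.eigenvalues rfl i) * c i
  have hw : aeval T p v = b.repr.symm w := by
    conv_lhs => rw [← b.sum_repr v]
    rw [← b.sum_repr_symm, map_sum]
    refine sum_congr rfl fun i _ => ?_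
    rw [map_smul, Module.End.aeval_apply_of_hasEigenvector
      (hT.hasEigenvector_eigenvectorBasis rfl i), smul_smul, mul_comm]
    rfl
  have hsq : ‖w‖ ^ 2 ≤ (C * ‖c‖) ^ 2 := by
    rw [mul_pow, EuclideanSpace.norm_sq_eq, EuclideanSpace.norm_sq_eq, mul_sum]
    refine sum_le_sum fun i _ => ?_
    simp only [w, Real.norm_eq_abs, sq_abs, mul_pow]
    have hμ := hp _ (hT.hasEigenvalue_eigenvalues rfl i)
    exact mul_le_mul_of_nonneg_right (sq_le_sq' (abs_le.mp hμ).1 (abs_le.mp hμ).2) (sq_nonneg _)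
  rw [hw, LinearIsometryEquiv.norm_map, ← b.repr.norm_map v]
  exact pow_le_pow_iff_left₀ (norm_nonneg _) (by positivity) two_ne_zero |>.mp hsq

end Spectral

section Chebyshev

open Polynomial.Chebyshev

noncomputable def chebyshevRate (ρ : ℝ) : ℝ :=
  (1 - Real.sqrt (1 - ρ)) / (1 + Real.sqrt (1 - ρ))

variable {ρ : ℝ}

theorem chebyshevRate_pos (hρ0 : 0 < ρ) : 0 < chebyshevRate ρ := by
  have hs : Real.sqrt (1 - ρ) < 1 := (Real.sqrt_lt' one_pos).mpr (by linarith)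
  have hs0 := Real.sqrt_nonneg (1 - ρ)
  unfold chebyshevRate
  apply div_pos <;> linarith

theorem chebyshevRate_add_inv (hρ0 : 0 < ρ) (hρ1 : ρ ≤ 1) :
    (chebyshevRate ρ + (chebyshevRate ρ)⁻¹) / 2 = 2 / ρ - 1 := by
  have hs2 : Real.sqrt (1 - ρ) ^ 2 = 1 - ρ := Real.sq_sqrt (by linarith)
  have hs1 : 1 - Real.sqrt (1 - ρ) ≠ 0 :=
    sub_ne_zero.mpr ((Real.sqrt_lt' one_pos).mpr (by linarith)).ne'
  unfold chebyshevRate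
  rw [inv_div]
  field_simp
  linear_combination 4 * hs2

theorem eval_T_two_div_sub_one (hρ0 : 0 < ρ) (hρ1 : ρ ≤ 1) (k : ℕ) :
    (T ℝ k).eval (2 / ρ - 1) = (1 + chebyshevRate ρ ^ (2 * k)) / (2 * chebyshevRate ρ ^ k) := by
  have hγ := chebyshevRate_pos hρ0
  rw [← chebyshevRate_add_inv hρ0 hρ1, T_real_eval_half_add_inv hγ, inv_pow]
  field_simp
  ring

noncomputable def rescaledChebyshev (ρ : ℝ) (k : ℕ) : ℝ[X] :=
  C ((T ℝ k).eval (2 / ρ - 1))⁻¹ * (T ℝ k).comp (C (2 / ρ) * X - 1)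

theorem natDegree_rescaledChebyshev_le (ρ : ℝ) (k : ℕ) :
    (rescaledChebyshev ρ k).natDegree ≤ k := by
  unfold rescaledChebyshev
  refine (natDegree_C_mul_le _ _).trans (natDegree_comp_le.trans ?_)
  calc _ ≤ k * 1 := Nat.mul_le_mul (by simp [natDegree_T]) (by compute_degree)
    _ = k := mul_one k

theorem eval_rescaledChebyshev (ρ : ℝ) (k : ℕ) (t : ℝ) :
    (rescaledChebyshev ρ k).eval t =
      ((T ℝ k).eval (2 / ρ - 1))⁻¹ * (T ℝ k).eval (2 / ρ * t - 1) := by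
  simp [rescaledChebyshev, eval_comp]

theorem eval_one_rescaledChebyshev (hρ0 : 0 < ρ) (hρ1 : ρ ≤ 1) (k : ℕ) :
    (rescaledChebyshev ρ k).eval 1 = 1 := by
  have hγ := chebyshevRate_pos hρ0
  rw [eval_rescaledChebyshev, mul_one]
  exact inv_mul_cancel₀ (by rw [eval_T_two_div_sub_one hρ0 hρ1]; positivity)

theorem abs_eval_rescaledChebyshev_le (hρ0 : 0 < ρ) (hρ1 : ρ ≤ 1) (k : ℕ) {t : ℝ}
    (ht : t ∈ Set.Icc 0 ρ) :
    |(rescaledChebyshev ρ k).eval t| ≤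
      2 * chebyshevRate ρ ^ k / (1 + chebyshevRate ρ ^ (2 * k)) := by
  have hγ := chebyshevRate_pos hρ0
  have hmem : |2 / ρ * t - 1| ≤ 1 := by
    have h1 : t / ρ ≤ 1 := (div_le_one hρ0).mpr ht.2
    have h0 : 0 ≤ t / ρ := div_nonneg ht.1 hρ0.le
    rw [show 2 / ρ * t = 2 * (t / ρ) by ring, abs_le]
    constructor <;> linarith
  rw [eval_rescaledChebyshev, eval_T_two_div_sub_one hρ0 hρ1, abs_mul, inv_div,
    abs_of_pos (by positivity : 0 < 2 * chebyshevRate ρ ^ k / (1 + chebyshevRate ρ ^ (2 * k)))]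
  exact mul_le_of_le_one_right (by positivity) (abs_eval_T_real_le_one k hmem)

end Chebyshev

/-- **Chebyshev acceleration of affine combinations of linear fixed-point iterates.**
Let `M` be symmetric with eigenvalues in `[0, ρ]`, `0 < ρ < 1`, and let the iterates
satisfy `x_i − x* = Mⁱ(x_0 − x*)` for `i = 0, …, k`. With
`γ = (1 − √(1−ρ))/(1 + √(1−ρ))`, there exist coefficients `α_0, …, α_k` summing to one
such that `‖Σ α_i x_i − x*‖ ≤ (2γᵏ/(1 + γ^{2k})) ‖x_0 − x*‖`. -/
theorem chebyshev_affine_combination_bound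
    (n k : ℕ)
    (M : Matrix (Fin n) (Fin n) ℝ) (hM : M.IsSymm)
    (ρ : ℝ) (hρ0 : 0 < ρ) (hρ1 : ρ < 1)
    (hspec : ∀ v : EuclideanSpace ℝ (Fin n),
      0 ≤ ⟪Matrix.toEuclideanLin M v, v⟫ ∧
      ⟪Matrix.toEuclideanLin M v, v⟫ ≤ ρ * ‖v‖ ^ 2)
    (γ : ℝ) (hγ : γ = (1 - Real.sqrt (1 - ρ)) / (1 + Real.sqrt (1 - ρ)))
    (xstar : EuclideanSpace ℝ (Fin n))
    (x : Fin (k + 1) → EuclideanSpace ℝ (Fin n))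
    (hx : ∀ i : Fin (k + 1),
      x i - xstar = Matrix.toEuclideanLin (M ^ (i : ℕ)) (x 0 - xstar)) :
    ∃ α : Fin (k + 1) → ℝ, ∑ i, α i = 1 ∧
      ‖(∑ i, α i • x i) - xstar‖ ≤ (2 * γ ^ k / (1 + γ ^ (2 * k))) * ‖x 0 - xstar‖ := by
  have hT : (Matrix.toEuclideanLin M).IsSymmetric :=
    Matrix.isSymmetric_toEuclideanLin_iff.mpr (Matrix.isHermitian_iff_isSymm.mpr hM)
  obtain rfl : γ = chebyshevRate ρ := hγ
  have hγ0 := chebyshevRate_pos hρ0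
  set q := rescaledChebyshev ρ k
  have hdeg := natDegree_rescaledChebyshev_le ρ k
  have hq1 := eval_one_rescaledChebyshev hρ0 hρ1.le k
  refine ⟨fun i => q.coeff i, (sum_fin_coeff_eq_eval_one hdeg).trans hq1, ?_⟩
  rw [sum_coeff_smul_iterate_sub_eq_aeval _ hdeg hq1 fun i => by
    rw [hx i, Matrix.toEuclideanLin_pow]]
  exact hT.norm_aeval_apply_le (by positivity) (fun μ hμ =>
    abs_eval_rescaledChebyshev_le hρ0 hρ1.le k (hμ.mem_Icc_of_inner_bounds hspec)) _
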